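/- Consider the set X := {0} ∪ {2^{-i} : i ∈ ℕ} ⊂ ℝ with the Euclidean metric. Then X admits a finite matching, but no matching on X is locally minimal. -/
import Mathlib


/-- A matching on a (possibly infinite) set `X`: a partition of `X` into two-element
subsets, encoded as a fixed-point-free involution. -/
def IsMatching {X : Type*} (π : X → X) : Prop :=
  Function.Involutive π ∧ ∀ x, π x ≠ x

/-- `π` is a locally minimal matching for the (pseudo)metric `d`: for every matching `π'`
differing from `π` only on finitely many pairs, the total `d`-length of the pairs of `π`
not in `π'` is at most that of the pairs of `π'` not in `π`.  (Each differing pair is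
counted twice in the sums below, consistently on both sides.) -/
def IsLocallyMinimalMatching {X : Type*} (d : X → X → ℝ) (π : X → X) : Prop :=
  ∀ π' : X → X, IsMatching π' → ∀ h : {x | π x ≠ π' x}.Finite,
    ∑ x ∈ h.toFinset, d x (π x) ≤ ∑ x ∈ h.toFinset, d x (π' x)

/-- The set `X = {0} ∪ {2^{-i} : i ∈ ℕ} ⊆ ℝ`. -/
def geomSet : Set ℝ := insert 0 {x : ℝ | ∃ i : ℕ, x = (2 : ℝ) ^ (-(i : ℤ))}

section Aux
noncomputable def gf : ℕ → ↥geomSet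
  | 0 => ⟨0, Or.inl rfl⟩
  | (n+1) => ⟨(2:ℝ) ^ (-(n:ℤ)), Or.inr ⟨n, rfl⟩⟩

lemma gf_val_zero : (gf 0).val = 0 := rfl
lemma gf_val_succ (n : ℕ) : (gf (n+1)).val = (1/2:ℝ) ^ n := by
  show (2:ℝ) ^ (-(n:ℤ)) = (1/2:ℝ)^n
  rw [zpow_neg, zpow_natCast, one_div, inv_pow]

lemma gf_val_nonneg (n : ℕ) : 0 ≤ (gf n).val := by
  cases n with
  | zero => simp [gf_val_zero]
  | succ n => rw [gf_val_succ]; positivity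

lemma gf_val_le (n : ℕ) : (gf n).val ≤ 2 * (1/2:ℝ)^n := by
  cases n with
  | zero => simp [gf_val_zero]
  | succ n => rw [gf_val_succ, pow_succ]; nlinarith [pow_nonneg (by norm_num : (0:ℝ) ≤ 1/2) n]

lemma gf_inj : Function.Injective gf := by
  intro m n h
  have hv : (gf m).val = (gf n).val := congrArg _ h
  match m, n with
  | 0, 0 => rfl
  | 0, (n+1) => rw [gf_val_zero, gf_val_succ] at hv; exact absurd hv.symm (by positivity)
  | (m+1), 0 => rw [gf_val_zero, gf_val_succ] at hv; exact absurd hv (by positivity)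
  | (m+1), (n+1) =>
    rw [gf_val_succ, gf_val_succ] at hv
    have := pow_right_injective₀ (by norm_num : (0:ℝ) < 1/2) (by norm_num : (1/2:ℝ) ≠ 1) hv
    omega

lemma gf_surj : Function.Surjective gf := by
  rintro ⟨x, hx | ⟨i, rfl⟩⟩
  · exact ⟨0, Subtype.ext hx.symm⟩
  · exact ⟨i+1, rfl⟩

noncomputable def ge : ℕ ≃ ↥geomSet := Equiv.ofBijective gf ⟨gf_inj, gf_surj⟩

lemma ge_apply (n : ℕ) : ge n = gf n := rfl

lemma ge_symm_gf (n : ℕ) : ge.symm (gf n) = n := ge.symm_apply_apply n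

def sig (n : ℕ) : ℕ := if n % 2 = 0 then n + 1 else n - 1

lemma sig_invol : Function.Involutive sig := by
  intro n; unfold sig; split_ifs with h1 h2 h3 <;> omega

lemma sig_ne (n : ℕ) : sig n ≠ n := by unfold sig; split_ifs <;> omega

lemma sig_ge (n : ℕ) : n ≤ sig n + 1 := by unfold sig; split_ifs <;> omega

noncomputable def pi1 : ↥geomSet → ↥geomSet := fun x => gf (sig (ge.symm x))

lemma pi1_matching : Function.Involutive pi1 ∧ ∀ x, pi1 x ≠ x := by
  constructor
  · intro x
    show gf (sig (ge.symm (gf (sig (ge.symm x))))) = x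
    rw [ge_symm_gf, sig_invol]
    exact ge.apply_symm_apply x
  · intro x h
    have h2 : gf (sig (ge.symm x)) = gf (ge.symm x) :=
      (h : gf (sig (ge.symm x)) = x).trans (ge.apply_symm_apply x).symm
    exact sig_ne _ (gf_inj h2)

lemma half_pow_sig (n : ℕ) : (1/2:ℝ) ^ (sig n) ≤ 2 * (1/2)^n := by
  have h1 : (1/2:ℝ) ^ (sig n + 1) ≤ (1/2)^n :=
    pow_le_pow_of_le_one (by norm_num) (by norm_num) (sig_ge n)
  rw [pow_succ] at h1; linarith

lemma pi1_summable : Summable (fun x : ↥geomSet => dist x (pi1 x)) := by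
  rw [← Equiv.summable_iff ge]
  have key : ((fun x : ↥geomSet => dist x (pi1 x)) ∘ ⇑ge) = fun n => dist (gf n) (gf (sig n)) := by
    funext n
    show dist (gf n) (gf (sig (ge.symm (ge n)))) = _
    rw [ge.symm_apply_apply]
  rw [key]
  have h1 : ∀ n, (0:ℝ) ≤ dist (gf n) (gf (sig n)) := fun n => dist_nonneg
  have h2 : ∀ n, dist (gf n) (gf (sig n)) ≤ 6 * (1/2:ℝ)^n := by
    intro n
    rw [Subtype.dist_eq, Real.dist_eq]
    have h1 := gf_val_le n
    have h2 := gf_val_le (sig n)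
    have h3 := gf_val_nonneg n
    have h4 := gf_val_nonneg (sig n)
    have h5 := half_pow_sig n
    rcases abs_cases ((gf n).val - (gf (sig n)).val) with ⟨h, _⟩ | ⟨h, _⟩ <;> rw [h] <;> linarith
  have h3 : Summable (fun n => 6 * (1/2:ℝ)^n) :=
    (summable_geometric_of_lt_one (by norm_num) (by norm_num)).mul_left 6
  exact Summable.of_nonneg_of_le h1 h2 h3

lemma gval_nonneg (x : ↥geomSet) : 0 ≤ x.val := by
  obtain ⟨n, rfl⟩ := gf_surj x; exact gf_val_nonneg n

lemma swap_lemma (π : ↥geomSet → ↥geomSet)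
    (hπinv : Function.Involutive π) (hπne : ∀ x, π x ≠ x)
    (hmin : ∀ π' : ↥geomSet → ↥geomSet,
      (Function.Involutive π' ∧ ∀ x, π' x ≠ x) → ∀ h : {x | π x ≠ π' x}.Finite,
      ∑ x ∈ h.toFinset, dist x (π x) ≤ ∑ x ∈ h.toFinset, dist x (π' x))
    (z a m M : ↥geomSet)
    (hza : z ≠ a) (hzm : z ≠ m) (hzM : z ≠ M) (ham : a ≠ m) (haM : a ≠ M) (hmM : m ≠ M)
    (hπz : π z = a) (hπm : π m = M)
    (hz0 : z.val = 0) (hm0 : 0 ≤ m.val) (hma : m.val < a.val) (hmMv : m.val < M.val) :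
    False := by
  classical
  have hπa : π a = z := by rw [← hπz]; exact hπinv z
  have hπM : π M = m := by rw [← hπm]; exact hπinv m
  set π' : ↥geomSet → ↥geomSet := fun x =>
    if x = z then m else if x = m then z else if x = a then M else if x = M then a
    else π x with hπ'def
  have hπ'z : π' z = m := by simp [hπ'def]
  have hπ'm : π' m = z := by simp [hπ'def, hzm.symm]
  have hπ'a : π' a = M := by simp [hπ'def, hza.symm, ham]
  have hπ'M : π' M = a := by simp [hπ'def, hzM.symm, hmM.symm, haM.symm]
  have hπ'other : ∀ x, x ≠ z → x ≠ m → x ≠ a → x ≠ M → π' x = π x := by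
    intro x h1 h2 h3 h4; simp [hπ'def, h1, h2, h3, h4]
  have hπ'inv : Function.Involutive π' := by
    intro x
    by_cases h1 : x = z; · rw [h1, hπ'z, hπ'm]
    by_cases h2 : x = m; · rw [h2, hπ'm, hπ'z]
    by_cases h3 : x = a; · rw [h3, hπ'a, hπ'M]
    by_cases h4 : x = M; · rw [h4, hπ'M, hπ'a]
    rw [hπ'other x h1 h2 h3 h4]
    have k1 : π x ≠ z := fun h => h3 (by have := congrArg π h; rwa [hπinv, hπz] at this)
    have k2 : π x ≠ m := fun h => h4 (by have := congrArg π h; rwa [hπinv, hπm] at this)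
    have k3 : π x ≠ a := fun h => h1 (by have := congrArg π h; rwa [hπinv, hπa] at this)
    have k4 : π x ≠ M := fun h => h2 (by have := congrArg π h; rwa [hπinv, hπM] at this)
    rw [hπ'other _ k1 k2 k3 k4]; exact hπinv x
  have hπ'ne : ∀ x, π' x ≠ x := by
    intro x
    by_cases h1 : x = z; · rw [h1, hπ'z]; exact hzm.symm
    by_cases h2 : x = m; · rw [h2, hπ'm]; exact hzm
    by_cases h3 : x = a; · rw [h3, hπ'a]; exact haM.symm
    by_cases h4 : x = M; · rw [h4, hπ'M]; exact haM
    rw [hπ'other x h1 h2 h3 h4]; exact hπne x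
  have hSeq : {x | π x ≠ π' x} = {z, a, m, M} := by
    ext x
    simp only [Set.mem_setOf_eq, Set.mem_insert_iff, Set.mem_singleton_iff]
    constructor
    · intro h
      by_contra hc
      push_neg at hc
      obtain ⟨h1, h2, h3, h4⟩ := hc
      exact h (hπ'other x h1 h3 h2 h4).symm
    · rintro (rfl | rfl | rfl | rfl)
      · rw [hπz, hπ'z]; exact ham
      · rw [hπa, hπ'a]; exact hzM
      · rw [hπm, hπ'm]; exact hzM.symm
      · rw [hπM, hπ'M]; exact ham.symm
  have hfin : {x | π x ≠ π' x}.Finite := by rw [hSeq]; exact (Set.toFinite _)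
  have hfs : hfin.toFinset = ({z, a, m, M} : Finset _) := by
    ext x
    simp [Set.Finite.mem_toFinset, hSeq]
  have hsum : ∀ f : ↥geomSet → ℝ,
      ∑ x ∈ ({z, a, m, M} : Finset _), f x = f z + f a + f m + f M := by
    intro f
    rw [Finset.sum_insert (by simp [hza, hzm, hzM]),
        Finset.sum_insert (by simp [ham, haM]),
        Finset.sum_insert (by simp [hmM]), Finset.sum_singleton]
    ring
  have hineq := hmin π' ⟨hπ'inv, hπ'ne⟩ hfin
  rw [hfs, hsum, hsum, hπz, hπa, hπm, hπM, hπ'z, hπ'a, hπ'm, hπ'M] at hineq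
  simp only [Subtype.dist_eq, Real.dist_eq] at hineq
  rw [hz0] at hineq
  simp only [zero_sub, sub_zero, abs_neg] at hineq
  rw [abs_of_nonneg (le_trans hm0 hma.le), abs_of_nonneg hm0,
      abs_of_nonpos (by linarith : m.val - M.val ≤ 0),
      abs_of_nonneg (by linarith : (0:ℝ) ≤ M.val - m.val)] at hineq
  rcases abs_cases (a.val - M.val) with ⟨e, _⟩ | ⟨e, _⟩ <;>
    rcases abs_cases (M.val - a.val) with ⟨e', _⟩ | ⟨e', _⟩ <;>
    rw [e, e'] at hineq <;> linarith

lemma half_pow_lt (j : ℕ) : (1/2:ℝ)^(j+1) < (1/2)^j := by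
  have : (0:ℝ) < (1/2)^j := by positivity
  rw [pow_succ]; nlinarith

lemma no_locmin (π : ↥geomSet → ↥geomSet)
    (hπinv : Function.Involutive π) (hπne : ∀ x, π x ≠ x)
    (hmin : ∀ π' : ↥geomSet → ↥geomSet,
      (Function.Involutive π' ∧ ∀ x, π' x ≠ x) → ∀ h : {x | π x ≠ π' x}.Finite,
      ∑ x ∈ h.toFinset, dist x (π x) ≤ ∑ x ∈ h.toFinset, dist x (π' x)) :
    False := by
  obtain ⟨k, hk⟩ := gf_surj (π (gf 0))
  have hk0 : k ≠ 0 := fun h => hπne (gf 0) (by rw [← hk, h])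
  obtain ⟨j, rfl⟩ := Nat.exists_eq_succ_of_ne_zero hk0
  have hπz : π (gf 0) = gf (j+1) := hk.symm
  have hπa : π (gf (j+1)) = gf 0 := by rw [hk]; exact hπinv _
  set c := π (gf (j+2)) with hcdef
  have hπc : π c = gf (j+2) := hπinv _
  have hcb : c ≠ gf (j+2) := hπne _
  have hcz : c ≠ gf 0 := by
    intro h
    have h2 := congrArg π h
    rw [hπc, hπz] at h2
    have := gf_inj h2; omega
  have hca : c ≠ gf (j+1) := by
    intro h
    have h2 := congrArg π h
    rw [hπc, hπa] at h2
    have := gf_inj h2; omega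
  have hgne : ∀ i i' : ℕ, i ≠ i' → gf i ≠ gf i' := fun i i' h h' => h (gf_inj h')
  have hvb_lt : (gf (j+2)).val < (gf (j+1)).val := by
    rw [gf_val_succ, gf_val_succ]; exact half_pow_lt j
  rcases lt_or_ge c.val (gf (j+2)).val with hlt | hle
  · exact swap_lemma π hπinv hπne hmin (gf 0) (gf (j+1)) c (gf (j+2))
      (hgne 0 (j+1) (by omega)) hcz.symm (hgne 0 (j+2) (by omega))
      hca.symm (hgne (j+1) (j+2) (by omega)) hcb
      hπz hπc gf_val_zero (gval_nonneg c) (lt_trans hlt hvb_lt) hlt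
  · have hne : (gf (j+2)).val ≠ c.val := fun h => hcb (Subtype.ext h.symm)
    exact swap_lemma π hπinv hπne hmin (gf 0) (gf (j+1)) (gf (j+2)) c
      (hgne 0 (j+1) (by omega)) (hgne 0 (j+2) (by omega)) hcz.symm
      (hgne (j+1) (j+2) (by omega)) hca.symm hcb.symm
      hπz hcdef.symm gf_val_zero (gval_nonneg _) hvb_lt (hle.lt_of_ne hne)

end Aux

/-- The set `{0} ∪ {2^{-i} : i ∈ ℕ} ⊆ ℝ` (with the Euclidean metric) admits a finite
matching, but no matching on it is locally minimal. -/
theorem stmt19 :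
    (∃ π : ↥geomSet → ↥geomSet, IsMatching π ∧
      Summable (fun x : ↥geomSet => dist x (π x))) ∧
    ∀ π : ↥geomSet → ↥geomSet, IsMatching π →
      ¬ IsLocallyMinimalMatching (fun x y : ↥geomSet => dist x y) π := by
  refine ⟨⟨pi1, ⟨pi1_matching.1, pi1_matching.2⟩, pi1_summable⟩, ?_⟩
  intro π hπ hmin
  exact no_locmin π hπ.1 hπ.2 (fun π' h' => hmin π' ⟨h'.1, h'.2⟩)
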